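/- Let R be a field, G a group, ρ₀ multiplicity-free of finite length, and V a ρ₀-typic R[G]-module. If f : ρ̃ → V is a nonzero R[G]-homomorphism from an indecomposable direct summand ρ̃ of ρ₀ whose image is multiplicity free and embeds into ρ̃, then f is injective. -/

import Mathlib

open DirectSum

section Defs
variable (A : Type) [Ring A]

abbrev Subquot {M : Type} [AddCommGroup M] [Module A M] (p q : Submodule A M) :=
  ↥q ⧸ Submodule.comap q.subtype p

/-- `S` is a Jordan–Hölder factor (simple subquotient) of `M`. -/
def IsJHFactor (M : Type) [AddCommGroup M] [Module A M]
    (S : Type) [AddCommGroup S] [Module A S] : Prop :=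
  IsSimpleModule A S ∧ ∃ p q : Submodule A M, p ≤ q ∧ Nonempty (Subquot A p q ≃ₗ[A] S)

/-- `M` has finite length and is multiplicity free: it has a composition series with
pairwise non-isomorphic simple factors. -/
def IsMultFree (M : Type) [AddCommGroup M] [Module A M] : Prop :=
  ∃ (n : ℕ) (f : Fin (n+1) → Submodule A M), Monotone f ∧ f 0 = ⊥ ∧ f (Fin.last n) = ⊤ ∧
    (∀ i : Fin n, IsSimpleModule A (Subquot A (f i.castSucc) (f i.succ))) ∧
    ∀ i j : Fin n, i ≠ j →
      IsEmpty (Subquot A (f i.castSucc) (f i.succ) ≃ₗ[A] Subquot A (f j.castSucc) (f j.succ))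

def IsIndecomposable (M : Type) [AddCommGroup M] [Module A M] : Prop :=
  Nontrivial M ∧ ∀ p q : Submodule A M, IsCompl p q → p = ⊥ ∨ q = ⊥

/-- `V` is `P`-typic: `P` decomposes into nonzero indecomposable summands `ρ i`, and
`V ≅ ⊕ᵢ (Wᵢ ⊗ ρ i)` with `Wᵢ` nonzero, expressed via copies `κ i →₀ ρ i`. -/
def IsTypic (P : Type) [AddCommGroup P] [Module A P]
    (V : Type) [AddCommGroup V] [Module A V] : Prop :=
  ∃ (ι : Type) (_ : Fintype ι) (ρ : ι → Submodule A P),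
    iSupIndep ρ ∧ iSup ρ = ⊤ ∧
    (∀ i, IsIndecomposable A ↥(ρ i)) ∧
    ∃ (κ : ι → Type) (_ : ∀ i, Nonempty (κ i)),
      Nonempty (V ≃ₗ[A] ⨁ i, (κ i →₀ ↥(ρ i)))

/-- `M` has an irreducible cosocle, i.e. a greatest proper submodule. -/
def HasSimpleCosocle (M : Type) [AddCommGroup M] [Module A M] : Prop :=
  ∃ N : Submodule A M, N ≠ ⊤ ∧ ∀ P : Submodule A M, P ≠ ⊤ → P ≤ N

/-- The cosocle of `M` is irreducible and isomorphic to `S`. -/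
def HasCosocle (M : Type) [AddCommGroup M] [Module A M]
    (S : Type) [AddCommGroup S] [Module A S] : Prop :=
  ∃ N : Submodule A M, (N ≠ ⊤ ∧ ∀ P : Submodule A M, P ≠ ⊤ → P ≤ N) ∧
    Nonempty ((M ⧸ N) ≃ₗ[A] S)

end Defs

/-! For an endomorphism `φ` of a multiplicity-free module of finite length, `ker φ ⊓ range φ = ⊥`:
a simple submodule `S` of both would occur twice as a composition factor, as `S / 0` and as
`φ⁻¹(S) / ker φ ≅ S`, and these two steps fit into one composition series. Hence `ker φⁿ = ker φ`
for `n ≥ 1`, and Fitting's decomposition `ker φⁿ ⊕ range φⁿ` shows that a nonzero endomorphism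
of an indecomposable such module is injective. The theorem applies this to `g ∘ f`, where `g`
embeds the image of `f` back into `p`. -/

open LinearMap Submodule

namespace RelSeries

variable {α : Type*} {r : SetRel α α}

def IsStep (s : RelSeries r) (x y : α) : Prop :=
  ∃ i : Fin s.length, s i.castSucc = x ∧ s i.succ = y

theorem isStep_snoc (s : RelSeries r) (y : α) (h : (s.last, y) ∈ r) :
    (s.snoc y h).IsStep s.last y :=
  ⟨Fin.last s.length, snoc_castSucc s y h _, last_snoc' s y h⟩

theorem IsStep.smash_left {p q : RelSeries r} {x y : α} (hs : p.IsStep x y)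
    (h : p.last = q.head) : (p.smash q h).IsStep x y := by
  obtain ⟨i, rfl, rfl⟩ := hs
  exact ⟨i.castAdd q.length, smash_castAdd h i, smash_succ_castAdd h i⟩

theorem IsStep.smash_right {p q : RelSeries r} {x y : α} (hs : q.IsStep x y)
    (h : p.last = q.head) : (p.smash q h).IsStep x y := by
  obtain ⟨i, rfl, rfl⟩ := hs
  exact ⟨i.natAdd p.length, smash_natAdd h i, smash_succ_natAdd h i⟩

end RelSeries

section FiniteLength

variable {A : Type} [Ring A] {M : Type} [AddCommGroup M] [Module A M]

theorem exists_compositionSeries_of_le [IsNoetherian A M] [IsArtinian A M]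
    {a b : Submodule A M} (h : a ≤ b) :
    ∃ s : CompositionSeries (Submodule A M), s.head = a ∧ s.last = b := by
  obtain ⟨f, f0, n, fn, hf⟩ := exists_covBy_seq_of_wellFoundedLT_wellFoundedGT_of_le h
  exact ⟨⟨n, fun i ↦ f i, fun i ↦ hf i i.2⟩, f0, fn⟩

theorem exists_compositionSeries_isStep_isStep [IsNoetherian A M] [IsArtinian A M]
    {a b c d : Submodule A M} (hab : a ⋖ b) (hbc : b ≤ c) (hcd : c ⋖ d) :
    ∃ s : CompositionSeries (Submodule A M),
      s.head = ⊥ ∧ s.last = ⊤ ∧ s.IsStep a b ∧ s.IsStep c d := by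
  obtain ⟨s₁, hs₁, rfl⟩ := exists_compositionSeries_of_le (bot_le : ⊥ ≤ a)
  obtain ⟨s₂, rfl, rfl⟩ := exists_compositionSeries_of_le hbc
  obtain ⟨s₃, hs₃, hs₃'⟩ := exists_compositionSeries_of_le (le_top : d ≤ ⊤)
  let t₁ := s₁.snoc s₂.head hab
  let t₂ := (s₂.snoc d hcd).smash s₃ (by simp [hs₃])
  have ht : t₁.last = t₂.head := by simp [t₁, t₂]
  exact ⟨t₁.smash t₂ ht, by simp [t₁, hs₁], by simp [t₂, hs₃'],
    (RelSeries.isStep_snoc s₁ _ hab).smash_left ht,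
    ((RelSeries.isStep_snoc s₂ d hcd).smash_left _).smash_right ht⟩

end FiniteLength

section DistinctFactors

variable (A : Type) [Ring A] (M : Type) [AddCommGroup M] [Module A M]

def HasDistinctFactors : Prop :=
  ∀ ⦃a b c d : Submodule A M⦄, a ⋖ b → b ≤ c → c ⋖ d →
    IsEmpty (Subquot A a b ≃ₗ[A] Subquot A c d)

variable {A M}

theorem IsMultFree.exists_compositionSeries (h : IsMultFree A M) :
    ∃ s : CompositionSeries (Submodule A M), s.head = ⊥ ∧ s.last = ⊤ ∧
      ∀ i j : Fin s.length, i ≠ j → IsEmpty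
        (Subquot A (s i.castSucc) (s i.succ) ≃ₗ[A] Subquot A (s j.castSucc) (s j.succ)) := by
  obtain ⟨n, c, hmono, h0, hn, hsimple, hdist⟩ := h
  exact ⟨⟨n, c, fun i ↦ (covBy_iff_quot_is_simple (hmono i.castSucc_le_succ)).2 (hsimple i)⟩,
    h0, hn, hdist⟩

theorem IsMultFree.isFiniteLength (h : IsMultFree A M) : IsFiniteLength A M :=
  let ⟨s, h0, h1, _⟩ := h.exists_compositionSeries
  isFiniteLength_of_exists_compositionSeries ⟨s, h0, h1⟩

theorem IsMultFree.hasDistinctFactors (h : IsMultFree A M) : HasDistinctFactors A M := by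
  obtain ⟨s₀, h0, h1, hdist⟩ := h.exists_compositionSeries
  obtain ⟨_, _⟩ := isFiniteLength_iff_isNoetherian_isArtinian.1 h.isFiniteLength
  intro a b c d hab hbc hcd
  obtain ⟨s, hs0, hs1, ⟨i, hia, hib⟩, ⟨j, hjc, hjd⟩⟩ :=
    exists_compositionSeries_isStep_isStep hab hbc hcd
  obtain ⟨e, he⟩ := CompositionSeries.jordan_holder s s₀ (hs0.trans h0.symm) (hs1.trans h1.symm)
  subst hia hib hjc hjd
  have hij : i ≠ j := by
    rintro rfl
    exact (hab.lt.trans_le hbc).false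
  exact ⟨fun φ ↦ (hdist (e i) (e j) (e.injective.ne hij)).false
    (((he i).linearEquiv.symm.trans φ).trans (he j).linearEquiv)⟩

noncomputable def Submodule.subquotEquivMapOfInjective {N : Type} [AddCommGroup N] [Module A N]
    {f : M →ₗ[A] N} (hf : Function.Injective f) (a b : Submodule A M) :
    Subquot A a b ≃ₗ[A] Subquot A (a.map f) (b.map f) :=
  Submodule.Quotient.equiv _ _ (b.equivMapOfInjective f hf) <| by
    ext z
    obtain ⟨w, rfl⟩ := (b.equivMapOfInjective f hf).surjective z
    simp [Submodule.mem_map_equiv, hf.eq_iff]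

theorem HasDistinctFactors.submodule (h : HasDistinctFactors A M) (p : Submodule A M) :
    HasDistinctFactors A p := by
  intro a b c d hab hbc hcd
  refine ⟨fun φ ↦ (h (map_covBy_of_injective p.injective_subtype hab) (map_mono hbc)
    (map_covBy_of_injective p.injective_subtype hcd)).false ?_⟩
  exact ((subquotEquivMapOfInjective p.injective_subtype a b).symm.trans φ).trans
    (subquotEquivMapOfInjective p.injective_subtype c d)

end DistinctFactors

section Endomorphisms

variable {A : Type} [Ring A] {M : Type} [AddCommGroup M] [Module A M]

theorem HasDistinctFactors.disjoint_ker_range [IsArtinian A M] (h : HasDistinctFactors A M)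
    (φ : Module.End A M) : Disjoint (ker φ) (range φ) := by
  rw [disjoint_iff]
  by_contra hne
  obtain ⟨S, hS, hSle⟩ := (eq_bot_or_exists_atom_le (ker φ ⊓ range φ)).resolve_left hne
  have : IsSimpleModule A S := isSimpleModule_iff_isAtom.2 hS
  let K := S.comap φ
  have hψ : Function.Surjective (φ.restrict fun x (hx : x ∈ K) ↦ hx) := by
    rintro ⟨y, hy⟩
    obtain ⟨x, rfl⟩ := mem_range.1 (mem_inf.1 (hSle hy)).2
    exact ⟨⟨x, hy⟩, rfl⟩
  let eK : Subquot A (ker φ) K ≃ₗ[A] S :=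
    (quotEquivOfEq _ _ (ker_restrict _).symm).trans (quotKerEquivOfSurjective _ hψ)
  let eS : Subquot A ⊥ S ≃ₗ[A] S := quotEquivOfEqBot _ (by simp)
  have hK : ker φ ⋖ K := (covBy_iff_quot_is_simple (ker_le_comap φ)).2 (.congr eK)
  exact (h hS.bot_covBy (hSle.trans inf_le_left) hK).false (eS.trans eK.symm)

theorem Module.End.ker_pow_succ_eq_ker_of_disjoint {φ : Module.End A M}
    (h : Disjoint (ker φ) (range φ)) (n : ℕ) : ker (φ ^ (n + 1)) = ker φ := by
  induction n with
  | zero => rw [zero_add, pow_one]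
  | succ n ih =>
    ext x
    rw [pow_succ, Module.End.mul_eq_comp, ker_comp, mem_comap, ih, mem_ker, mem_ker]
    exact ⟨fun hx ↦ disjoint_def.1 h _ hx (mem_range_self φ x), fun hx ↦ by rw [hx, map_zero]⟩

theorem HasDistinctFactors.injective_of_ne_zero [IsNoetherian A M] [IsArtinian A M]
    (hd : HasDistinctFactors A M) (hM : IsIndecomposable A M) {φ : Module.End A M}
    (hφ : φ ≠ 0) : Function.Injective φ := by
  obtain ⟨n, hn, hcompl⟩ :=
    ((Filter.eventually_ge_atTop 1).and φ.eventually_isCompl_ker_pow_range_pow).exists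
  obtain ⟨k, rfl⟩ := Nat.exists_eq_add_of_le' hn
  rw [Module.End.ker_pow_succ_eq_ker_of_disjoint (hd.disjoint_ker_range φ)] at hcompl
  rcases hM.2 _ _ hcompl with hker | hrange
  · exact ker_eq_bot.1 hker
  · rw [hrange] at hcompl
    exact absurd (ker_eq_top.1 (eq_top_of_isCompl_bot hcompl)) hφ

end Endomorphisms

theorem stmt7_general {R G : Type} [Field R] [Group G]
    (P : Type) [AddCommGroup P] [Module (MonoidAlgebra R G) P]
    (V : Type) [AddCommGroup V] [Module (MonoidAlgebra R G) V]
    (hmf : IsMultFree (MonoidAlgebra R G) P)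
    (p : Submodule (MonoidAlgebra R G) P)
    (hind : IsIndecomposable (MonoidAlgebra R G) ↥p)
    (f : ↥p →ₗ[MonoidAlgebra R G] V) (hf : f ≠ 0)
    (hemb : ∃ g : ↥(LinearMap.range f) →ₗ[MonoidAlgebra R G] ↥p, Function.Injective g) :
    Function.Injective f := by
  obtain ⟨_, _⟩ := isFiniteLength_iff_isNoetherian_isArtinian.1 hmf.isFiniteLength
  obtain ⟨g, hg⟩ := hemb
  have hgf : g ∘ₗ f.rangeRestrict ≠ 0 := fun h ↦ hf <| LinearMap.ext fun x ↦ by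
    have hx : f.rangeRestrict x = 0 :=
      (injective_iff_map_eq_zero g).1 hg _ (LinearMap.congr_fun h x)
    simpa using congrArg Subtype.val hx
  rw [← f.injective_rangeRestrict_iff]
  exact Function.Injective.of_comp (f := g)
    ((hmf.hasDistinctFactors.submodule p).injective_of_ne_zero hind hgf)

/-- a nonzero map from an indecomposable direct summand `p` of `ρ₀` to a
`ρ₀`-typic module, whose image is multiplicity free and embeds into `p`, is injective. -/
theorem stmt7 {R G : Type} [Field R] [Group G]
    (P : Type) [AddCommGroup P] [Module (MonoidAlgebra R G) P]
    (V : Type) [AddCommGroup V] [Module (MonoidAlgebra R G) V]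
    (hmf : IsMultFree (MonoidAlgebra R G) P)
    (htypic : IsTypic (MonoidAlgebra R G) P V)
    (p : Submodule (MonoidAlgebra R G) P)
    (hsummand : ∃ q, IsCompl p q)
    (hind : IsIndecomposable (MonoidAlgebra R G) ↥p)
    (f : ↥p →ₗ[MonoidAlgebra R G] V) (hf : f ≠ 0)
    (himmf : IsMultFree (MonoidAlgebra R G) ↥(LinearMap.range f))
    (hemb : ∃ g : ↥(LinearMap.range f) →ₗ[MonoidAlgebra R G] ↥p, Function.Injective g) :
    Function.Injective f :=
  stmt7_general P V hmf p hind f hf hemb
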